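/- arXiv:1009.4416 — 4 statements merged into one kernel-verified Lean document; each statement's English description precedes it below -/
import Mathlib

section
/- Let ν > 0, α > 0, U₀ ∈ ℝ, and for y > 0, t > 0 define u(y,t) := U₀[1 − (2/π)∫₀^∞ (sin(ξy)/ξ) E(ξ,t) dξ + (2α/π)∫₀^∞ (ξ sin(ξy)/(1+αξ²)) E(ξ,t) dξ], where E(ξ,t) := exp(−νξ²t/(1+αξ²)) and the integrals are improper integrals, i.e. limits of ∫₀^R as R → ∞. Then for every y > 0 and t > 0 the partial derivatives ∂u/∂t, ∂²u/∂y² and ∂³u/∂t∂y² exist and satisfy ∂u/∂t = ν ∂²u/∂y² + α ∂³u/∂t∂y². -/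
open MeasureTheory Filter Real Set Topology

/-!
Subtracting `α` times the second integral from the first merges them into
`K y t = ∫₀^∞ sin (ξ y) / (ξ (1 + α ξ²)) E(ξ,t) dξ`, which converges absolutely. Hence
`u = U₀ (1 - (2/π) K)`, and the derivatives of `u` are derivatives of `K` taken under the
integral sign, every integrand being dominated by a multiple of `(1 + α ξ²)⁻¹`.

The exception is `∂²K/∂y²`: as `ξ → ∞`, `E(ξ,t)` tends to `e^{-νt/α}` and not to `0`, so
differentiating `∂K/∂y = ∫ cos (ξ y) E / (1 + α ξ²)` once more in `y` under the integral sign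
gives a divergent integral. We write `∂K/∂y = e^{-νt/α} P y + Q y t` with
`P y = ∫ cos (ξ y) / (1 + α ξ²)`; in `Q` the factor `E - e^{-νt/α} = O((1 + α ξ²)⁻¹)` restores
domination, and `P` is differentiated after the substitution `ξ = u / y`.

The equation then reduces to the pointwise identity `∂ₜ k = ν ∂_y q + α ∂ₜ∂_y q` between the
integrands `k` of `K` and `q` of `Q`; the contributions of `P` cancel because
`∂ₜ e^{-νt/α} = -(ν/α) e^{-νt/α}`.
-/

theorem integrable_inv_add_mul_sq {a b : ℝ} (ha : 0 < a) (hb : 0 < b) :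
    Integrable fun x : ℝ => (a + b * x ^ 2)⁻¹ := by
  refine ((integrable_inv_one_add_sq.comp_mul_left' (R := √(b / a)) (by positivity)).const_mul
    a⁻¹).congr (Eventually.of_forall fun x => ?_)
  simp only [mul_pow, sq_sqrt (div_pos hb ha).le]
  field_simp

theorem integrableOn_of_continuousOn_of_norm_le {V : Type*} [NormedAddCommGroup V]
    {f : ℝ → V} {g : ℝ → ℝ} {s : Set ℝ} (hs : MeasurableSet s) (hf : ContinuousOn f s)
    (hg : IntegrableOn g s) (hfg : ∀ x ∈ s, ‖f x‖ ≤ g x) : IntegrableOn f s :=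
  hg.mono' (hf.aestronglyMeasurable hs) ((ae_restrict_iff' hs).2 (Eventually.of_forall hfg))

theorem hasDerivAt_integral_of_continuousOn_of_norm_deriv_le {V : Type*} [NormedAddCommGroup V]
    [NormedSpace ℝ V] {F F' : ℝ → ℝ → V} {g : ℝ → ℝ} {s U : Set ℝ} {x₀ : ℝ}
    (hs : MeasurableSet s) (hU : U ∈ 𝓝 x₀)
    (hF : ∀ x ∈ U, ContinuousOn (F x) s) (hF₀ : IntegrableOn (F x₀) s)
    (hF' : ContinuousOn (F' x₀) s) (hg : IntegrableOn g s)
    (hF'g : ∀ ξ ∈ s, ∀ x ∈ U, ‖F' x ξ‖ ≤ g ξ)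
    (hderiv : ∀ ξ ∈ s, ∀ x ∈ U, HasDerivAt (F · ξ) (F' x ξ) x) :
    HasDerivAt (fun x => ∫ ξ in s, F x ξ) (∫ ξ in s, F' x₀ ξ) x₀ :=
  (hasDerivAt_integral_of_dominated_loc_of_deriv_le hU
    (eventually_of_mem hU fun x hx => (hF x hx).aestronglyMeasurable hs) hF₀
    (hF'.aestronglyMeasurable hs) ((ae_restrict_iff' hs).2 (Eventually.of_forall hF'g)) hg
    ((ae_restrict_iff' hs).2 (Eventually.of_forall hderiv))).2

namespace SecondGradeStokes

noncomputable def ω (α ξ : ℝ) : ℝ := (1 + α * ξ ^ 2)⁻¹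

noncomputable def E (ν α ξ t : ℝ) : ℝ := exp (-(ν * ξ ^ 2 * t) / (1 + α * ξ ^ 2))

/-- The limit of `E ν α ξ t` as `ξ → ∞`. -/
noncomputable def Einf (ν α t : ℝ) : ℝ := exp (-(ν / α) * t)

variable {ν α y t : ℝ}

lemma one_add_mul_sq_pos (hα : 0 ≤ α) (ξ : ℝ) : 0 < 1 + α * ξ ^ 2 := by positivity

lemma ω_pos (hα : 0 ≤ α) (ξ : ℝ) : 0 < ω α ξ := inv_pos.2 (one_add_mul_sq_pos hα ξ)

lemma norm_ω (hα : 0 ≤ α) (ξ : ℝ) : ‖ω α ξ‖ = ω α ξ := norm_of_nonneg (ω_pos hα ξ).le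

lemma ω_le_one (hα : 0 ≤ α) (ξ : ℝ) : ω α ξ ≤ 1 :=
  inv_le_one_of_one_le₀ (le_add_of_nonneg_right (by positivity))

lemma norm_mul_ω_le (hα : 0 < α) (ξ : ℝ) : ‖ξ * ω α ξ‖ ≤ (2 * √α)⁻¹ := by
  have h := two_mul_le_add_sq 1 (√α * |ξ|)
  rw [mul_pow, sq_sqrt hα.le, sq_abs] at h
  rw [norm_mul, norm_ω hα.le, ω, Real.norm_eq_abs, ← div_eq_mul_inv,
    div_le_iff₀ (one_add_mul_sq_pos hα.le ξ), inv_mul_eq_div, le_div_iff₀ (by positivity)]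
  linarith

lemma continuous_ω (hα : 0 ≤ α) : Continuous (ω α) := by
  unfold ω; fun_prop (disch := exact fun ξ => (one_add_mul_sq_pos hα ξ).ne')

lemma integrableOn_ω (hα : 0 < α) : IntegrableOn (ω α) (Ioi 0) :=
  (integrable_inv_add_mul_sq one_pos hα).integrableOn

lemma continuous_E (hα : 0 ≤ α) (ν t : ℝ) : Continuous fun ξ => E ν α ξ t := by
  unfold E; fun_prop (disch := exact fun ξ => (one_add_mul_sq_pos hα ξ).ne')

lemma E_pos (ν α ξ t : ℝ) : 0 < E ν α ξ t := exp_pos _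

lemma E_le_one (hν : 0 ≤ ν) (hα : 0 ≤ α) (ht : 0 ≤ t) (ξ : ℝ) : E ν α ξ t ≤ 1 :=
  exp_le_one_iff.2 <| div_nonpos_of_nonpos_of_nonneg (neg_nonpos.2 (by positivity))
    (one_add_mul_sq_pos hα ξ).le

lemma norm_E_le_one (hν : 0 ≤ ν) (hα : 0 ≤ α) (ht : 0 ≤ t) (ξ : ℝ) : ‖E ν α ξ t‖ ≤ 1 := by
  rw [norm_of_nonneg (E_pos ν α ξ t).le]; exact E_le_one hν hα ht ξ

lemma Einf_eq (hα : 0 < α) (ξ : ℝ) :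
    Einf ν α t = E ν α ξ t * exp (-(ν * t / α * ω α ξ)) := by
  have := (one_add_mul_sq_pos hα.le ξ).ne'
  rw [Einf, E, ω, ← exp_add]
  congr 1
  field_simp
  ring

lemma norm_E_sub_Einf_le (hν : 0 ≤ ν) (hα : 0 < α) (ht : 0 ≤ t) (ξ : ℝ) :
    ‖E ν α ξ t - Einf ν α t‖ ≤ ν * t / α * ω α ξ := by
  have hx : 0 ≤ ν * t / α * ω α ξ := mul_nonneg (by positivity) (ω_pos hα.le ξ).le
  have hE := E_le_one hν hα.le ht ξ
  have hE₀ := E_pos ν α ξ t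
  have h₁ : exp (-(ν * t / α * ω α ξ)) ≤ 1 := exp_le_one_iff.2 (neg_nonpos.2 hx)
  have h₂ := add_one_le_exp (-(ν * t / α * ω α ξ))
  -- with `x = ν t ω / α`: `Einf = E e⁻ˣ` and `1 - x ≤ e⁻ˣ ≤ 1`, so `0 ≤ E - Einf ≤ x E ≤ x`
  rw [Einf_eq hα ξ, norm_of_nonneg (by nlinarith)]
  nlinarith [mul_le_mul_of_nonneg_left h₂ hE₀.le, mul_le_mul_of_nonneg_left hE hx]

lemma hasDerivAt_E (ν α ξ t : ℝ) :
    HasDerivAt (fun τ => E ν α ξ τ) (-(ν * ξ ^ 2) * ω α ξ * E ν α ξ t) t := by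
  convert ((hasDerivAt_id t).const_mul (-(ν * ξ ^ 2) * ω α ξ)).exp using 1
  · funext τ; rw [E, ω, id]; ring_nf
  · rw [E, ω, id]; ring_nf

lemma hasDerivAt_Einf (ν α t : ℝ) :
    HasDerivAt (fun τ => Einf ν α τ) (-(ν / α) * Einf ν α t) t := by
  simpa [Einf, mul_comm] using ((hasDerivAt_id t).const_mul (-(ν / α))).exp

lemma sq_add_mul_sq_pos (hα : 0 ≤ α) (hy : y ≠ 0) (u : ℝ) : 0 < y ^ 2 + α * u ^ 2 := by
  positivity

noncomputable def P (α y : ℝ) : ℝ := ∫ ξ in Ioi 0, cos (ξ * y) * ω α ξ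

noncomputable def Py (α y : ℝ) : ℝ :=
  ∫ u in Ioi 0, cos u * (α * u ^ 2 - y ^ 2) / (y ^ 2 + α * u ^ 2) ^ 2

lemma integrableOn_P_integrand (hα : 0 < α) (y : ℝ) :
    IntegrableOn (fun ξ => cos (ξ * y) * ω α ξ) (Ioi 0) := by
  have := continuous_ω hα.le
  refine integrableOn_of_continuousOn_of_norm_le measurableSet_Ioi (by fun_prop)
    (integrableOn_ω hα) fun ξ _ => ?_
  exact (norm_mul_le_of_le (abs_cos_le_one _) (norm_ω hα.le ξ).le).trans_eq (one_mul _)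

lemma P_eq_integral_div (hα : 0 < α) (hy : 0 < y) :
    P α y = ∫ u in Ioi 0, y * cos u / (y ^ 2 + α * u ^ 2) := by
  calc P α y = ∫ ξ in Ioi 0, y * (fun u => y * cos u / (y ^ 2 + α * u ^ 2)) (y * ξ) := by
        refine setIntegral_congr_fun measurableSet_Ioi fun ξ _ => ?_
        have := (one_add_mul_sq_pos hα.le ξ).ne'
        simp only [ω]
        field_simp
    _ = _ := by
        rw [integral_const_mul,
          integral_comp_mul_left_Ioi (fun u => y * cos u / (y ^ 2 + α * u ^ 2)) _ hy, mul_zero,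
          smul_eq_mul, mul_inv_cancel_left₀ hy.ne']

lemma norm_Py_integrand_le (hα : 0 ≤ α) (hy : y ≠ 0) (u : ℝ) :
    ‖cos u * (α * u ^ 2 - y ^ 2) / (y ^ 2 + α * u ^ 2) ^ 2‖ ≤ (y ^ 2 + α * u ^ 2)⁻¹ := by
  have hW := sq_add_mul_sq_pos hα hy u
  have hnum : ‖cos u * (α * u ^ 2 - y ^ 2)‖ ≤ y ^ 2 + α * u ^ 2 := by
    refine (norm_mul_le_of_le (abs_cos_le_one u) (abs_le.2 ⟨?_, ?_⟩)).trans_eq (one_mul _) <;>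
      nlinarith [sq_nonneg y, mul_nonneg hα (sq_nonneg u)]
  rw [norm_div, norm_pow, norm_of_nonneg hW.le]
  calc _ ≤ (y ^ 2 + α * u ^ 2) / (y ^ 2 + α * u ^ 2) ^ 2 := by gcongr
    _ = _ := by field_simp

lemma hasDerivAt_P (hα : 0 < α) (hy : 0 < y) : HasDerivAt (P α) (Py α y) y := by
  have hU : Ioi (y / 2) ∈ 𝓝 y := Ioi_mem_nhds (half_lt_self hy)
  suffices HasDerivAt (fun z => ∫ u in Ioi 0, z * cos u / (z ^ 2 + α * u ^ 2)) (Py α y) y from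
    this.congr_of_eventuallyEq
      (eventually_of_mem (Ioi_mem_nhds hy) fun z hz => P_eq_integral_div hα hz)
  unfold Py
  refine hasDerivAt_integral_of_continuousOn_of_norm_deriv_le measurableSet_Ioi hU
    (F' := fun z u => cos u * (α * u ^ 2 - z ^ 2) / (z ^ 2 + α * u ^ 2) ^ 2)
    (fun z hz => ?_) ?_ ?_
    (integrable_inv_add_mul_sq (pow_pos (half_pos hy) 2) hα).integrableOn (fun u _ z hz => ?_)
    (fun u _ z hz => ?_)
  · have hz : z ≠ 0 := (lt_trans (half_pos hy) hz).ne'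
    exact Continuous.continuousOn <| by
      fun_prop (disch := exact fun u => (sq_add_mul_sq_pos hα.le hz u).ne')
  · refine integrableOn_of_continuousOn_of_norm_le measurableSet_Ioi
      (Continuous.continuousOn <| by
        fun_prop (disch := exact fun u => (sq_add_mul_sq_pos hα.le hy.ne' u).ne'))
      ((integrable_inv_add_mul_sq (pow_pos hy 2) hα).integrableOn.const_mul ‖y‖) fun u _ => ?_
    rw [mul_div_assoc, div_eq_mul_inv]
    refine (norm_mul_le_of_le le_rfl (norm_mul_le_of_le (abs_cos_le_one u)
      (norm_of_nonneg (inv_pos.2 (sq_add_mul_sq_pos hα.le hy.ne' u)).le).le)).trans_eq ?_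
    ring
  · exact Continuous.continuousOn <| by
      fun_prop (disch := exact fun u => pow_ne_zero 2 (sq_add_mul_sq_pos hα.le hy.ne' u).ne')
  · have hz₀ : y / 2 < z := hz
    refine (norm_Py_integrand_le hα.le (lt_trans (half_pos hy) hz₀).ne' u).trans
      (inv_anti₀ (sq_add_mul_sq_pos hα.le (half_pos hy).ne' u) ?_)
    gcongr
  · have hW := sq_add_mul_sq_pos hα.le (lt_trans (half_pos hy) hz).ne' u
    have hnum : HasDerivAt (fun w => w * cos u) (cos u) z := by
      simpa using (hasDerivAt_id z).mul_const (cos u)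
    have hden : HasDerivAt (fun w => w ^ 2 + α * u ^ 2) (2 * z) z := by
      simpa using (hasDerivAt_pow 2 z).add_const (α * u ^ 2)
    exact (hnum.fun_div hden hW.ne').congr_deriv (by ring)

noncomputable def Q (ν α y t : ℝ) : ℝ :=
  ∫ ξ in Ioi 0, cos (ξ * y) * ω α ξ * (E ν α ξ t - Einf ν α t)

noncomputable def Qy (ν α y t : ℝ) : ℝ :=
  ∫ ξ in Ioi 0, -(ξ * ω α ξ) * sin (ξ * y) * (E ν α ξ t - Einf ν α t)

/-- The integrand is `∂ₜ` of that of `Qy`, rewritten with `α ξ² ω α ξ = 1 - ω α ξ` so that it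
is visibly `O(ω α ξ)`. -/
noncomputable def Qyt (ν α y t : ℝ) : ℝ :=
  ∫ ξ in Ioi 0, ν / α * (ξ * ω α ξ) * sin (ξ * y) *
    (E ν α ξ t - Einf ν α t - ω α ξ * E ν α ξ t)

lemma integrableOn_Q_integrand (hν : 0 ≤ ν) (hα : 0 < α) (y : ℝ) (ht : 0 ≤ t) :
    IntegrableOn (fun ξ => cos (ξ * y) * ω α ξ * (E ν α ξ t - Einf ν α t)) (Ioi 0) := by
  have := continuous_ω hα.le
  have := continuous_E hα.le ν t
  refine integrableOn_of_continuousOn_of_norm_le measurableSet_Ioi (by fun_prop)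
    ((integrableOn_ω hα).mul_const (ν * t / α)) fun ξ _ => ?_
  have hE := (norm_E_sub_Einf_le hν hα ht ξ).trans
    (mul_le_of_le_one_right (by positivity) (ω_le_one hα.le ξ))
  exact (norm_mul_le_of_le (norm_mul_le_of_le (abs_cos_le_one _) (norm_ω hα.le ξ).le)
    hE).trans_eq (by ring)

lemma norm_Qy_integrand_le (hν : 0 ≤ ν) (hα : 0 < α) (y : ℝ) (ht : 0 ≤ t) (ξ : ℝ) :
    ‖-(ξ * ω α ξ) * sin (ξ * y) * (E ν α ξ t - Einf ν α t)‖ ≤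
      (2 * √α)⁻¹ * (ν * t / α) * ω α ξ :=
  (norm_mul_le_of_le (norm_mul_le_of_le ((norm_neg _).trans_le (norm_mul_ω_le hα ξ))
    (abs_sin_le_one _)) (norm_E_sub_Einf_le hν hα ht ξ)).trans_eq (by ring)

lemma integrableOn_Qy_integrand (hν : 0 ≤ ν) (hα : 0 < α) (y : ℝ) (ht : 0 ≤ t) :
    IntegrableOn (fun ξ => -(ξ * ω α ξ) * sin (ξ * y) * (E ν α ξ t - Einf ν α t)) (Ioi 0) := by
  have := continuous_ω hα.le
  have := continuous_E hα.le ν t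
  exact integrableOn_of_continuousOn_of_norm_le measurableSet_Ioi (by fun_prop)
    ((integrableOn_ω hα).const_mul _) fun ξ _ => norm_Qy_integrand_le hν hα y ht ξ

lemma norm_Qyt_integrand_le (hν : 0 ≤ ν) (hα : 0 < α) (y : ℝ) (ht : 0 ≤ t) (ξ : ℝ) :
    ‖ν / α * (ξ * ω α ξ) * sin (ξ * y) * (E ν α ξ t - Einf ν α t - ω α ξ * E ν α ξ t)‖ ≤
      ν / α * (2 * √α)⁻¹ * (ν * t / α + 1) * ω α ξ := by
  have h : ‖E ν α ξ t - Einf ν α t - ω α ξ * E ν α ξ t‖ ≤ (ν * t / α + 1) * ω α ξ := by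
    have := norm_mul_le_of_le (norm_ω hα.le ξ).le (norm_E_le_one hν hα.le ht ξ)
    linarith [norm_sub_le (E ν α ξ t - Einf ν α t) (ω α ξ * E ν α ξ t),
      norm_E_sub_Einf_le hν hα ht ξ]
  exact (norm_mul_le_of_le (norm_mul_le_of_le (norm_mul_le_of_le
    (norm_of_nonneg (div_nonneg hν hα.le)).le (norm_mul_ω_le hα ξ)) (abs_sin_le_one _))
    h).trans_eq (by ring)

lemma integrableOn_Qyt_integrand (hν : 0 ≤ ν) (hα : 0 < α) (y : ℝ) (ht : 0 ≤ t) :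
    IntegrableOn (fun ξ => ν / α * (ξ * ω α ξ) * sin (ξ * y) *
      (E ν α ξ t - Einf ν α t - ω α ξ * E ν α ξ t)) (Ioi 0) := by
  have := continuous_ω hα.le
  have := continuous_E hα.le ν t
  exact integrableOn_of_continuousOn_of_norm_le measurableSet_Ioi (by fun_prop)
    ((integrableOn_ω hα).const_mul _) fun ξ _ => norm_Qyt_integrand_le hν hα y ht ξ

lemma hasDerivAt_Q_space (hν : 0 ≤ ν) (hα : 0 < α) (y : ℝ) (ht : 0 ≤ t) :
    HasDerivAt (fun z => Q ν α z t) (Qy ν α y t) y := by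
  have := continuous_ω hα.le
  have := continuous_E hα.le ν t
  unfold Q Qy
  refine hasDerivAt_integral_of_continuousOn_of_norm_deriv_le measurableSet_Ioi univ_mem
    (F' := fun z ξ => -(ξ * ω α ξ) * sin (ξ * z) * (E ν α ξ t - Einf ν α t))
    (fun z _ => by fun_prop) (integrableOn_Q_integrand hν hα y ht) (by fun_prop)
    ((integrableOn_ω hα).const_mul _) (fun ξ _ z _ => norm_Qy_integrand_le hν hα z ht ξ)
    fun ξ _ z _ => ?_
  exact ((((hasDerivAt_id' z).const_mul ξ).cos.mul_const _).mul_const _).congr_deriv (by ring)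

lemma hasDerivAt_Qy_time (hν : 0 ≤ ν) (hα : 0 < α) (y : ℝ) (ht : 0 < t) :
    HasDerivAt (fun τ => Qy ν α y τ) (Qyt ν α y t) t := by
  have := continuous_ω hα.le
  unfold Qy Qyt
  refine hasDerivAt_integral_of_continuousOn_of_norm_deriv_le measurableSet_Ioi
    (Ioo_mem_nhds ht (lt_two_mul_self ht))
    (F' := fun τ ξ => ν / α * (ξ * ω α ξ) * sin (ξ * y) *
      (E ν α ξ τ - Einf ν α τ - ω α ξ * E ν α ξ τ))
    (fun τ _ => have := continuous_E hα.le ν τ; by fun_prop)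
    (integrableOn_Qy_integrand hν hα y ht.le) (have := continuous_E hα.le ν t; by fun_prop)
    ((integrableOn_ω hα).const_mul (ν / α * (2 * √α)⁻¹ * (ν * (2 * t) / α + 1)))
    (fun ξ _ τ hτ => ?_) fun ξ _ τ _ => ?_
  · refine (norm_Qyt_integrand_le hν hα y hτ.1.le ξ).trans ?_
    have := ω_pos hα.le ξ
    gcongr
    exact hτ.2.le
  · have := (one_add_mul_sq_pos hα.le ξ).ne'
    refine (((hasDerivAt_E ν α ξ τ).sub (hasDerivAt_Einf ν α τ)).const_mul
      (-(ξ * ω α ξ) * sin (ξ * y))).congr_deriv ?_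
    simp only [ω]
    field_simp
    ring

noncomputable def K (ν α y t : ℝ) : ℝ := ∫ ξ in Ioi 0, sin (ξ * y) / ξ * ω α ξ * E ν α ξ t

lemma norm_sin_mul_div_le (ξ y : ℝ) : ‖sin (ξ * y) / ξ‖ ≤ ‖y‖ := by
  rcases eq_or_ne ξ 0 with rfl | hξ
  · simp
  · rw [norm_div, div_le_iff₀ (norm_pos_iff.2 hξ), ← norm_mul, mul_comm y]
    exact abs_sin_le_abs

lemma continuousOn_K_integrand (hα : 0 ≤ α) (ν y t : ℝ) :
    ContinuousOn (fun ξ => sin (ξ * y) / ξ * ω α ξ * E ν α ξ t) (Ioi 0) := by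
  have := continuous_ω hα
  have := continuous_E hα ν t
  fun_prop (disch := grind)

lemma integrableOn_K_integrand (hν : 0 ≤ ν) (hα : 0 < α) (y : ℝ) (ht : 0 ≤ t) :
    IntegrableOn (fun ξ => sin (ξ * y) / ξ * ω α ξ * E ν α ξ t) (Ioi 0) :=
  integrableOn_of_continuousOn_of_norm_le measurableSet_Ioi
    (continuousOn_K_integrand hα.le ν y t) ((integrableOn_ω hα).const_mul ‖y‖) fun ξ _ =>
      (norm_mul_le_of_le (norm_mul_le_of_le (norm_sin_mul_div_le ξ y) (norm_ω hα.le ξ).le)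
        (norm_E_le_one hν hα.le ht ξ)).trans_eq (mul_one _)

lemma hasDerivAt_K_time (hν : 0 ≤ ν) (hα : 0 < α) (y : ℝ) (ht : 0 < t) :
    HasDerivAt (fun τ => K ν α y τ) (ν * Qy ν α y t + α * Qyt ν α y t) t := by
  have := continuous_ω hα.le
  have := continuous_E hα.le ν t
  have key : HasDerivAt (fun τ => K ν α y τ)
      (∫ ξ in Ioi 0, -ν * (ξ * ω α ξ) * sin (ξ * y) * ω α ξ * E ν α ξ t) t := by
    unfold K
    refine hasDerivAt_integral_of_continuousOn_of_norm_deriv_le measurableSet_Ioi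
      (Ioi_mem_nhds ht) (F' := fun τ ξ => -ν * (ξ * ω α ξ) * sin (ξ * y) * ω α ξ * E ν α ξ τ)
      (fun τ _ => continuousOn_K_integrand hα.le ν y τ)
      (integrableOn_K_integrand hν hα y ht.le) (by fun_prop)
      ((integrableOn_ω hα).const_mul (ν * (2 * √α)⁻¹)) (fun ξ _ τ hτ => ?_) fun ξ hξ τ _ => ?_
    · have hν' : ‖-ν‖ ≤ ν := ((norm_neg ν).trans (norm_of_nonneg hν)).le
      exact (norm_mul_le_of_le (norm_mul_le_of_le (norm_mul_le_of_le (norm_mul_le_of_le hν'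
        (norm_mul_ω_le hα ξ)) (abs_sin_le_one _)) (norm_ω hα.le ξ).le)
        (norm_E_le_one hν hα.le (le_of_lt hτ) ξ)).trans_eq (by ring)
    · have hξ : ξ ≠ 0 := ne_of_gt hξ
      exact ((hasDerivAt_E ν α ξ τ).const_mul (sin (ξ * y) / ξ * ω α ξ)).congr_deriv
        (by field_simp)
  refine key.congr_deriv ?_
  rw [Qy, Qyt, ← integral_const_mul, ← integral_const_mul,
    ← integral_add ((integrableOn_Qy_integrand hν hα y ht.le).const_mul ν)
      ((integrableOn_Qyt_integrand hν hα y ht.le).const_mul α)]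
  refine setIntegral_congr_fun measurableSet_Ioi fun ξ _ => ?_
  field_simp
  ring

lemma hasDerivAt_K_space (hν : 0 ≤ ν) (hα : 0 < α) (y : ℝ) (ht : 0 ≤ t) :
    HasDerivAt (fun z => K ν α z t) (Einf ν α t * P α y + Q ν α y t) y := by
  have := continuous_ω hα.le
  have := continuous_E hα.le ν t
  have key : HasDerivAt (fun z => K ν α z t)
      (∫ ξ in Ioi 0, cos (ξ * y) * ω α ξ * E ν α ξ t) y := by
    unfold K
    refine hasDerivAt_integral_of_continuousOn_of_norm_deriv_le measurableSet_Ioi univ_mem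
      (F' := fun z ξ => cos (ξ * z) * ω α ξ * E ν α ξ t)
      (fun z _ => continuousOn_K_integrand hα.le ν z t) (integrableOn_K_integrand hν hα y ht)
      (by fun_prop) (integrableOn_ω hα) (fun ξ _ z _ => ?_) fun ξ hξ z _ => ?_
    · exact (norm_mul_le_of_le (norm_mul_le_of_le (abs_cos_le_one _) (norm_ω hα.le ξ).le)
        (norm_E_le_one hν hα.le ht ξ)).trans_eq (by ring)
    · have hξ : ξ ≠ 0 := ne_of_gt hξ
      exact (((((hasDerivAt_id' z).const_mul ξ).sin.div_const ξ).mul_const (ω α ξ)).mul_const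
        (E ν α ξ t)).congr_deriv (by field_simp)
  refine key.congr_deriv ?_
  rw [P, Q, ← integral_const_mul, ← integral_add ((integrableOn_P_integrand hα y).const_mul _)
    (integrableOn_Q_integrand hν hα y ht)]
  exact setIntegral_congr_fun measurableSet_Ioi fun ξ _ => by ring

lemma sub_mul_eq_K_of_tendsto (hν : 0 ≤ ν) (hα : 0 < α) (y : ℝ) (ht : 0 ≤ t) {I₁ I₂ : ℝ}
    (h₁ : Tendsto (fun R => ∫ ξ in (0 : ℝ)..R, sin (ξ * y) / ξ * E ν α ξ t) atTop (𝓝 I₁))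
    (h₂ : Tendsto (fun R => ∫ ξ in (0 : ℝ)..R, ξ * sin (ξ * y) / (1 + α * ξ ^ 2) * E ν α ξ t)
      atTop (𝓝 I₂)) :
    I₁ - α * I₂ = K ν α y t := by
  refine tendsto_nhds_unique ((h₁.sub (h₂.const_mul α)).congr' ?_)
    (intervalIntegral_tendsto_integral_Ioi 0 (integrableOn_K_integrand hν hα y ht) tendsto_id)
  filter_upwards [eventually_ge_atTop 0] with R hR
  have hK : IntervalIntegrable (fun ξ => sin (ξ * y) / ξ * ω α ξ * E ν α ξ t) volume 0 R :=
    (intervalIntegrable_iff_integrableOn_Ioc_of_le hR).2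
      ((integrableOn_K_integrand hν hα y ht).mono_set Ioc_subset_Ioi_self)
  have hI₂ : IntervalIntegrable (fun ξ => ξ * sin (ξ * y) / (1 + α * ξ ^ 2) * E ν α ξ t)
      volume 0 R := by
    have := continuous_E hα.le ν t
    exact Continuous.intervalIntegrable (by
      fun_prop (disch := exact fun ξ => (one_add_mul_sq_pos hα.le ξ).ne')) 0 R
  rw [id, sub_eq_iff_eq_add, ← intervalIntegral.integral_const_mul,
    ← intervalIntegral.integral_add hK (hI₂.const_mul α)]
  refine intervalIntegral.integral_congr fun ξ _ => ?_
  rcases eq_or_ne ξ 0 with rfl | hξ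
  · simp
  · have := (one_add_mul_sq_pos hα.le ξ).ne'
    simp only [ω]
    field_simp

end SecondGradeStokes

open SecondGradeStokes

/-- The Fourier sine transform solution of Christov and Christov satisfies the governing
PDE `∂u/∂t = ν ∂²u/∂y² + α ∂³u/∂t∂y²` of the second-grade fluid on the quarter plane
`y > 0`, `t > 0`.  The two integrals over `(0,∞)` are improper, i.e. limits of `∫₀ᴿ` as
`R → ∞`. -/
theorem stmt2 (ν α U₀ : ℝ) (hν : 0 < ν) (hα : 0 < α) (I₁ I₂ u : ℝ → ℝ → ℝ)
    (hI₁ : ∀ y t : ℝ, 0 < y → 0 < t →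
      Tendsto (fun R => ∫ ξ in (0:ℝ)..R,
          (Real.sin (ξ * y) / ξ) * Real.exp (-(ν * ξ ^ 2 * t) / (1 + α * ξ ^ 2)))
        atTop (nhds (I₁ y t)))
    (hI₂ : ∀ y t : ℝ, 0 < y → 0 < t →
      Tendsto (fun R => ∫ ξ in (0:ℝ)..R,
          (ξ * Real.sin (ξ * y) / (1 + α * ξ ^ 2)) *
            Real.exp (-(ν * ξ ^ 2 * t) / (1 + α * ξ ^ 2)))
        atTop (nhds (I₂ y t)))
    (hu : ∀ y t : ℝ, 0 < y → 0 < t →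
      u y t = U₀ * (1 - (2 / Real.pi) * I₁ y t + (2 * α / Real.pi) * I₂ y t)) :
    ∃ ut uy uyy uyyt : ℝ → ℝ → ℝ,
      (∀ y t : ℝ, 0 < y → 0 < t → HasDerivAt (fun τ => u y τ) (ut y t) t) ∧
      (∀ y t : ℝ, 0 < y → 0 < t → HasDerivAt (fun z => u z t) (uy y t) y) ∧
      (∀ y t : ℝ, 0 < y → 0 < t → HasDerivAt (fun z => uy z t) (uyy y t) y) ∧
      (∀ y t : ℝ, 0 < y → 0 < t → HasDerivAt (fun τ => uyy y τ) (uyyt y t) t) ∧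
      (∀ y t : ℝ, 0 < y → 0 < t → ut y t = ν * uyy y t + α * uyyt y t) := by
  have hu_eq : ∀ y t, 0 < y → 0 < t → u y t = U₀ - 2 * U₀ / π * K ν α y t := by
    intro y t hy ht
    rw [hu y t hy ht, ← sub_mul_eq_K_of_tendsto hν.le hα y ht.le (hI₁ y t hy ht) (hI₂ y t hy ht)]
    ring
  refine ⟨fun y t => -(2 * U₀ / π * (ν * Qy ν α y t + α * Qyt ν α y t)),
    fun y t => -(2 * U₀ / π * (Einf ν α t * P α y + Q ν α y t)),
    fun y t => -(2 * U₀ / π * (Einf ν α t * Py α y + Qy ν α y t)),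
    fun y t => -(2 * U₀ / π * (-(ν / α) * Einf ν α t * Py α y + Qyt ν α y t)),
    fun y t hy ht => ?_, fun y t hy ht => ?_, fun y t hy ht => ?_, fun y t hy ht => ?_,
    fun y t _ _ => by field_simp; ring⟩
  · exact (((hasDerivAt_K_time hν.le hα y ht).const_mul _).const_sub U₀).congr_of_eventuallyEq
      (eventually_of_mem (Ioi_mem_nhds ht) fun τ hτ => hu_eq y τ hy hτ)
  · exact (((hasDerivAt_K_space hν.le hα y ht.le).const_mul _).const_sub U₀).congr_of_eventuallyEq
      (eventually_of_mem (Ioi_mem_nhds hy) fun z hz => hu_eq z t hz ht)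
  · exact ((((hasDerivAt_P hα hy).const_mul _).add
      (hasDerivAt_Q_space hν.le hα y ht.le)).const_mul _).neg
  · exact ((((hasDerivAt_Einf ν α t).mul_const _).add
      (hasDerivAt_Qy_time hν.le hα y ht)).const_mul _).neg
end

section
/- Let ν > 0, U₀ ∈ ℝ, and let erfc(x) := (2/√π)∫_x^∞ e^{−s²} ds. For y > 0, t > 0 let u_α(y,t) := U₀[1 − (2/π)∫₀^∞ (sin(ξy)/ξ) E_α(ξ,t) dξ + (2α/π)∫₀^∞ (ξ sin(ξy)/(1+αξ²)) E_α(ξ,t) dξ], where E_α(ξ,t) := exp(−νξ²t/(1+αξ²)) and the integrals are improper integrals (limits of ∫₀^R as R → ∞). Then for every fixed y > 0 and t > 0, lim_{α→0⁺} u_α(y,t) = U₀ erfc( y/(2√(νt)) ). -/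
/-!
Since `1/ξ - αξ/(1 + αξ²) = 1/(ξ(1 + αξ²))`, the two improper integrals combine into the single
absolutely convergent integral `I₁ - α I₂ = ∫₀^∞ K_α`, where
`K_α(ξ) = sin(ξy)/(ξ(1 + αξ²)) · exp(-νtξ²/(1 + αξ²))`. Uniformly in `α ≥ 0`, `|K_α(ξ)|` is at most
`y` (from `|sin x| ≤ |x|`) and at most `1/(νtξ³)` (from `x e⁻ˣ ≤ 1`), so dominated convergence
lets `α → 0`. The limit `∫₀^∞ sin(ξy)/ξ · e^{-cξ²} dξ` is computed by writing
`sin(ξy)/ξ = ∫₀^y cos(ξs) ds`, exchanging the integrals and using the Fourier transform of the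
Gaussian; it equals `(π/2)(1 - erfc(y/(2√c)))`, where `c = νt`.
-/

open MeasureTheory Filter Real

/-- The complementary error function `erfc(x) = (2/√π) ∫ₓ^∞ e^{−s²} ds`. -/
noncomputable def erfc (x : ℝ) : ℝ := (2 / Real.sqrt Real.pi) * ∫ s in Set.Ioi x, Real.exp (-s ^ 2)

open Set Topology

theorem integral_cos_mul_mul_exp_neg_mul_sq {c : ℝ} (hc : 0 < c) (s : ℝ) :
    ∫ x, cos (s * x) * exp (-c * x ^ 2) = √(π / c) * exp (-s ^ 2 / (4 * c)) := by
  have hre : ∀ x : ℝ, (Complex.exp (Complex.I * s * x) * Complex.exp (-c * x ^ 2)).re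
      = cos (s * x) * exp (-c * x ^ 2) := fun x => by
    rw [← Complex.exp_add, Complex.exp_re]
    simp [← Complex.ofReal_pow, mul_comm]
  have hint :
      Integrable fun x : ℝ => Complex.exp (Complex.I * s * x) * Complex.exp (-c * x ^ 2) := by
    convert integrable_cexp_quadratic (b := c) (by simpa using hc) (Complex.I * s) 0 using 2
    rw [← Complex.exp_add]
    ring_nf
  have h := congrArg Complex.re (fourierIntegral_gaussian (b := c) (by simpa using hc) s)
  rw [← RCLike.re_to_complex, ← integral_re hint] at h
  simp only [RCLike.re_to_complex, hre] at h
  have hrhs : ((π : ℂ) / c) ^ (1 / 2 : ℂ) * Complex.exp (-(s : ℂ) ^ 2 / (4 * c))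
      = ((√(π / c) * exp (-s ^ 2 / (4 * c)) : ℝ) : ℂ) := by
    rw [Complex.ofReal_mul, Complex.ofReal_exp, sqrt_eq_rpow,
      Complex.ofReal_cpow (by positivity)]
    push_cast
    rfl
  rw [h, hrhs, Complex.ofReal_re]

theorem integral_Ioi_cos_mul_mul_exp_neg_mul_sq {c : ℝ} (hc : 0 < c) (s : ℝ) :
    ∫ x in Ioi 0, cos (s * x) * exp (-c * x ^ 2) = √(π / c) / 2 * exp (-s ^ 2 / (4 * c)) := by
  have h := integral_comp_abs (f := fun x => cos (s * x) * exp (-c * x ^ 2))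
  have heven : ∀ x : ℝ, cos (s * |x|) * exp (-c * |x| ^ 2) = cos (s * x) * exp (-c * x ^ 2) :=
    fun x => by rcases abs_choice x with hx | hx <;> simp [hx]
  simp only [heven, integral_cos_mul_mul_exp_neg_mul_sq hc] at h
  linarith

theorem integral_cos_mul_eq_sin_mul_div {ξ : ℝ} (hξ : ξ ≠ 0) (y : ℝ) :
    ∫ s in (0)..y, cos (ξ * s) = sin (ξ * y) / ξ := by
  rw [intervalIntegral.integral_comp_mul_left (fun u => cos u) hξ, integral_cos]
  simp [div_eq_inv_mul]

theorem erfc_eq_one_sub_integral (x : ℝ) :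
    erfc x = 1 - 2 / √π * ∫ s in (0)..x, exp (-s ^ 2) := by
  have hint : ∀ a : ℝ, IntegrableOn (fun s => exp (-s ^ 2)) (Ioi a) := fun a => by
    simpa using (integrable_exp_neg_mul_sq one_pos).integrableOn
  have hhalf : ∫ s in Ioi 0, exp (-s ^ 2) = √π / 2 := by simpa using integral_gaussian_Ioi 1
  rw [erfc, ← intervalIntegral.integral_Ioi_sub_Ioi' (hint 0) (hint x), hhalf]
  have : √π ≠ 0 := by positivity
  field_simp
  ring

theorem integral_Ioi_sin_mul_div_mul_exp_neg_mul_sq {c y : ℝ} (hc : 0 < c) (hy : 0 ≤ y) :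
    ∫ ξ in Ioi 0, sin (ξ * y) / ξ * exp (-c * ξ ^ 2) = π / 2 * (1 - erfc (y / (2 * √c))) := by
  have hfubini : Integrable (Function.uncurry fun ξ s => cos (ξ * s) * exp (-c * ξ ^ 2))
      ((volume.restrict (Ioi 0)).prod (volume.restrict (Ioc 0 y))) := by
    have hdom := ((integrable_exp_neg_mul_sq hc).integrableOn (s := Ioi 0)).mul_prod
      (integrableOn_const (μ := volume) (s := Ioc 0 y) (C := (1 : ℝ)) measure_Ioc_lt_top.ne)
    refine hdom.mono' (by fun_prop) (Eventually.of_forall fun p => ?_)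
    rw [Function.uncurry_apply_pair, norm_mul, norm_of_nonneg (exp_pos _).le, norm_eq_abs, mul_one]
    exact mul_le_of_le_one_left (exp_pos _).le (abs_cos_le_one _)
  have hscale : ∀ s : ℝ, exp (-s ^ 2 / (4 * c)) = exp (-(s / (2 * √c)) ^ 2) := fun s => by
    rw [div_pow, mul_pow, sq_sqrt hc.le]
    ring_nf
  have hsqrt : √(π / c) / 2 * (2 * √c) = √π := by
    rw [sqrt_div' _ hc.le]
    field_simp
  calc ∫ ξ in Ioi 0, sin (ξ * y) / ξ * exp (-c * ξ ^ 2)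
      = ∫ ξ in Ioi 0, ∫ s in Ioc 0 y, cos (ξ * s) * exp (-c * ξ ^ 2) :=
        setIntegral_congr_fun measurableSet_Ioi fun ξ hξ => by
          rw [integral_mul_const, ← intervalIntegral.integral_of_le hy,
            integral_cos_mul_eq_sin_mul_div hξ.ne' y]
    _ = ∫ s in Ioc 0 y, ∫ ξ in Ioi 0, cos (s * ξ) * exp (-c * ξ ^ 2) := by
        simp_rw [integral_integral_swap hfubini, mul_comm _ (_ : ℝ)]
    _ = ∫ s in (0)..y, √(π / c) / 2 * exp (-(s / (2 * √c)) ^ 2) := by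
        simp_rw [integral_Ioi_cos_mul_mul_exp_neg_mul_sq hc, hscale,
          intervalIntegral.integral_of_le hy]
    _ = √π * ∫ σ in (0)..y / (2 * √c), exp (-σ ^ 2) := by
        rw [intervalIntegral.integral_const_mul,
          intervalIntegral.integral_comp_div (fun σ => exp (-σ ^ 2)) (by positivity), zero_div,
          smul_eq_mul, ← mul_assoc, hsqrt]
    _ = π / 2 * (1 - erfc (y / (2 * √c))) := by
        rw [erfc_eq_one_sub_integral]
        field_simp
        rw [sq_sqrt pi_pos.le]
        ring

theorem integrableOn_min_one_div_mul_pow_three {c y : ℝ} (hc : 0 < c) (hy : 0 ≤ y) :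
    IntegrableOn (fun ξ => min y (1 / (c * ξ ^ 3))) (Ioi 0) := by
  have hmeas : AEStronglyMeasurable (fun ξ : ℝ => min y (1 / (c * ξ ^ 3))) :=
    (by fun_prop : Measurable fun ξ : ℝ => min y (1 / (c * ξ ^ 3))).aestronglyMeasurable
  rw [← Ioc_union_Ioi_eq_Ioi zero_le_one]
  refine IntegrableOn.union ?_ ?_
  · refine (integrableOn_const (C := y) measure_Ioc_lt_top.ne).mono' hmeas.restrict
      (ae_restrict_of_forall_mem measurableSet_Ioc fun ξ hξ => ?_)
    have : 0 < ξ := hξ.1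
    rw [norm_of_nonneg (le_min hy (by positivity))]
    exact min_le_left _ _
  · refine ((integrableOn_Ioi_rpow_of_lt (by norm_num : (-3 : ℝ) < -1) one_pos).const_mul c⁻¹).mono'
      hmeas.restrict (ae_restrict_of_forall_mem measurableSet_Ioi fun ξ (hξ : 1 < ξ) => ?_)
    have : 0 < ξ := one_pos.trans hξ
    rw [norm_of_nonneg (le_min hy (by positivity)), rpow_neg this.le,
      show (3 : ℝ) = (3 : ℕ) by norm_num, rpow_natCast]
    exact (min_le_right _ _).trans_eq (by field_simp)

noncomputable def secondGradeKernel (ν t y α ξ : ℝ) : ℝ :=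
  sin (ξ * y) / (ξ * (1 + α * ξ ^ 2)) * exp (-(ν * ξ ^ 2 * t) / (1 + α * ξ ^ 2))

section SecondGradeKernel

variable {ν t y α ξ : ℝ}

theorem abs_secondGradeKernel_le (hνt : 0 < ν * t) (hy : 0 ≤ y) (hα : 0 ≤ α) (hξ : 0 < ξ) :
    |secondGradeKernel ν t y α ξ| ≤ min y (1 / (ν * t * ξ ^ 3)) := by
  set D := 1 + α * ξ ^ 2
  set x := ν * t * ξ ^ 2 / D
  have hD : 1 ≤ D := le_add_of_nonneg_right (by positivity)
  have hx : 0 ≤ x := by positivity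
  have hK : |secondGradeKernel ν t y α ξ| = |sin (ξ * y)| / (ξ * D) * exp (-x) := by
    rw [secondGradeKernel, abs_mul, abs_div, abs_of_pos (by positivity : 0 < ξ * D),
      abs_of_pos (exp_pos _)]
    congr 3
    ring
  rw [hK]
  refine le_min ?_ ?_
  · have hsin : |sin (ξ * y)| ≤ ξ * y * D :=
      (abs_sin_le_abs.trans_eq (abs_of_nonneg (by positivity))).trans
        (le_mul_of_one_le_right (by positivity) hD)
    calc |sin (ξ * y)| / (ξ * D) * exp (-x) ≤ |sin (ξ * y)| / (ξ * D) :=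
          mul_le_of_le_one_right (by positivity) (exp_le_one_iff.mpr (neg_nonpos.mpr hx))
      _ ≤ y := by
          rw [div_le_iff₀ (by positivity)]
          linarith
  · have hxexp : x * exp (-x) ≤ 1 :=
      (mul_exp_neg_le_exp_neg_one x).trans (exp_le_one_iff.mpr (by norm_num))
    calc |sin (ξ * y)| / (ξ * D) * exp (-x) ≤ 1 / (ξ * D) * exp (-x) := by
          gcongr
          exact abs_sin_le_one _
      _ = 1 / (ν * t * ξ ^ 3) * (x * exp (-x)) := by
          have : ν * t ≠ 0 := hνt.ne'
          simp only [x]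
          field_simp
          exact (div_self this).symm
      _ ≤ 1 / (ν * t * ξ ^ 3) := mul_le_of_le_one_right (by positivity) hxexp

theorem measurable_secondGradeKernel : Measurable (secondGradeKernel ν t y α) := by
  unfold secondGradeKernel
  fun_prop

theorem integrableOn_secondGradeKernel (hνt : 0 < ν * t) (hy : 0 ≤ y) (hα : 0 ≤ α) :
    IntegrableOn (secondGradeKernel ν t y α) (Ioi 0) :=
  (integrableOn_min_one_div_mul_pow_three hνt hy).mono'
    measurable_secondGradeKernel.aestronglyMeasurable
    (ae_restrict_of_forall_mem measurableSet_Ioi fun _ hξ => abs_secondGradeKernel_le hνt hy hα hξ)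

theorem secondGradeKernel_zero (ν t y ξ : ℝ) :
    secondGradeKernel ν t y 0 ξ = sin (ξ * y) / ξ * exp (-(ν * t) * ξ ^ 2) := by
  simp only [secondGradeKernel]
  ring_nf

theorem tendsto_integral_secondGradeKernel (hνt : 0 < ν * t) (hy : 0 ≤ y) :
    Tendsto (fun α => ∫ ξ in Ioi 0, secondGradeKernel ν t y α ξ) (𝓝[>] 0)
      (𝓝 (π / 2 * (1 - erfc (y / (2 * √(ν * t)))))) := by
  rw [← integral_Ioi_sin_mul_div_mul_exp_neg_mul_sq hνt hy]
  simp_rw [← secondGradeKernel_zero]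
  refine tendsto_integral_filter_of_dominated_convergence _
    (Eventually.of_forall fun _ => measurable_secondGradeKernel.aestronglyMeasurable)
    ?_ (integrableOn_min_one_div_mul_pow_three hνt hy) ?_
  · filter_upwards [self_mem_nhdsWithin] with α (hα : 0 < α)
    exact ae_restrict_of_forall_mem measurableSet_Ioi fun _ hξ =>
      abs_secondGradeKernel_le hνt hy hα.le hξ
  · refine ae_restrict_of_forall_mem measurableSet_Ioi fun ξ (hξ : 0 < ξ) => ?_
    have hcont : ContinuousAt (fun α => secondGradeKernel ν t y α ξ) 0 := by
      unfold secondGradeKernel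
      fun_prop (disch := simp [hξ.ne'])
    exact hcont.tendsto.mono_left nhdsWithin_le_nhds

theorem sin_div_mul_exp_eq_secondGradeKernel_add (hα : 0 ≤ α) :
    sin (ξ * y) / ξ * exp (-(ν * ξ ^ 2 * t) / (1 + α * ξ ^ 2))
      = secondGradeKernel ν t y α ξ
        + α * (ξ * sin (ξ * y) / (1 + α * ξ ^ 2) * exp (-(ν * ξ ^ 2 * t) / (1 + α * ξ ^ 2))) := by
  rcases eq_or_ne ξ 0 with rfl | hξ
  · -- all three terms are junk divisions by zero, hence `0`
    simp [secondGradeKernel]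
  · have : 1 + α * ξ ^ 2 ≠ 0 := by positivity
    rw [secondGradeKernel]
    field_simp

theorem integral_secondGradeKernel_eq_of_tendsto (hνt : 0 < ν * t) (hy : 0 ≤ y) (hα : 0 ≤ α)
    {I₁ I₂ : ℝ}
    (h₁ : Tendsto (fun R => ∫ ξ in (0)..R,
      sin (ξ * y) / ξ * exp (-(ν * ξ ^ 2 * t) / (1 + α * ξ ^ 2))) atTop (𝓝 I₁))
    (h₂ : Tendsto (fun R => ∫ ξ in (0)..R,
      ξ * sin (ξ * y) / (1 + α * ξ ^ 2) * exp (-(ν * ξ ^ 2 * t) / (1 + α * ξ ^ 2))) atTop (𝓝 I₂)) :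
    ∫ ξ in Ioi 0, secondGradeKernel ν t y α ξ = I₁ - α * I₂ := by
  have hK := integrableOn_secondGradeKernel hνt hy hα
  have hD : ∀ ξ : ℝ, 1 + α * ξ ^ 2 ≠ 0 := fun ξ => by positivity
  have hcont : Continuous fun ξ =>
      ξ * sin (ξ * y) / (1 + α * ξ ^ 2) * exp (-(ν * ξ ^ 2 * t) / (1 + α * ξ ^ 2)) := by
    fun_prop (disch := exact hD)
  refine tendsto_nhds_unique (intervalIntegral_tendsto_integral_Ioi 0 hK tendsto_id) ?_
  refine (h₁.sub (h₂.const_mul α)).congr' ?_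
  filter_upwards [eventually_ge_atTop 0] with R hR
  simp_rw [sin_div_mul_exp_eq_secondGradeKernel_add hα]
  rw [intervalIntegral.integral_add
      ((intervalIntegrable_iff_integrableOn_Ioc_of_le hR).2 (hK.mono_set Ioc_subset_Ioi_self))
      ((hcont.const_mul α).intervalIntegrable 0 R),
    intervalIntegral.integral_const_mul, add_sub_cancel_right, id]

end SecondGradeKernel

/-- Newtonian limit: as the second-grade parameter `α → 0⁺`, the Fourier sine transform
solution `u_α` of Stokes' first problem for the second-grade fluid tends, at each fixed
`y > 0`, `t > 0`, to Stokes' classical solution `U₀ erfc(y/(2√(νt)))`.  The integrals over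
`(0,∞)` are improper, i.e. limits of `∫₀ᴿ` as `R → ∞`. -/
theorem stmt9 (ν U₀ : ℝ) (hν : 0 < ν) (I₁ I₂ u : ℝ → ℝ → ℝ → ℝ)
    (hI₁ : ∀ α y t : ℝ, 0 < α → 0 < y → 0 < t →
      Tendsto (fun R => ∫ ξ in (0:ℝ)..R,
          (Real.sin (ξ * y) / ξ) * Real.exp (-(ν * ξ ^ 2 * t) / (1 + α * ξ ^ 2)))
        atTop (nhds (I₁ α y t)))
    (hI₂ : ∀ α y t : ℝ, 0 < α → 0 < y → 0 < t →
      Tendsto (fun R => ∫ ξ in (0:ℝ)..R,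
          (ξ * Real.sin (ξ * y) / (1 + α * ξ ^ 2)) *
            Real.exp (-(ν * ξ ^ 2 * t) / (1 + α * ξ ^ 2)))
        atTop (nhds (I₂ α y t)))
    (hu : ∀ α y t : ℝ, 0 < α → 0 < y → 0 < t →
      u α y t = U₀ * (1 - (2 / Real.pi) * I₁ α y t + (2 * α / Real.pi) * I₂ α y t)) :
    ∀ y t : ℝ, 0 < y → 0 < t →
      Tendsto (fun α => u α y t) (nhdsWithin 0 (Set.Ioi 0))
        (nhds (U₀ * erfc (y / (2 * Real.sqrt (ν * t))))) := by
  intro y t hy ht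
  have hνt : 0 < ν * t := mul_pos hν ht
  have hu_kernel : ∀ᶠ α in 𝓝[>] 0,
      U₀ * (1 - 2 / π * ∫ ξ in Ioi 0, secondGradeKernel ν t y α ξ) = u α y t := by
    filter_upwards [self_mem_nhdsWithin] with α (hα : 0 < α)
    rw [hu α y t hα hy ht, integral_secondGradeKernel_eq_of_tendsto hνt hy.le hα.le
      (hI₁ α y t hα hy ht) (hI₂ α y t hα hy ht)]
    ring
  refine Tendsto.congr' hu_kernel ?_
  convert ((tendsto_integral_secondGradeKernel hνt hy.le).const_mul (2 / π)).const_sub 1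
    |>.const_mul U₀ using 2
  field_simp [pi_ne_zero]
  ring
end

section
/- Let ν > 0, α > 0, Δt > 0, Δy > 0, θ ∈ ℝ and g ∈ ℂ. Suppose the complex grid function 𝔲_j^n := g^n e^{ijθ} (j ∈ ℤ, n ∈ ℕ) satisfies, for all j ∈ ℤ and n ∈ ℕ, the difference scheme (𝔲_j^{n+1} − 𝔲_j^n)/Δt = (ν/Δy²)·(1/2)[(𝔲_{j+1}^{n+1} − 2𝔲_j^{n+1} + 𝔲_{j−1}^{n+1}) + (𝔲_{j+1}^{n} − 2𝔲_j^{n} + 𝔲_{j−1}^{n})] + (α/(ΔtΔy²))[(𝔲_{j+1}^{n+1} − 2𝔲_j^{n+1} + 𝔲_{j−1}^{n+1}) − (𝔲_{j+1}^{n} − 2𝔲_j^{n} + 𝔲_{j−1}^{n})]. Then |g| ≤ 1. Explicitly, g = (1 + αs − νΔt s/2)/(1 + αs + νΔt s/2) with s := (4/Δy²) sin²(θ/2), and this quotient has absolute value at most 1. -/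
/-! A Fourier mode `e^{ijθ}` is an eigenvector of the second difference with eigenvalue
`-4 sin²(θ/2) = -Δy² s`, so the scheme at a single grid point reduces to
`(g - 1)(1 + αs) = -(g + 1) νΔt s / 2`. Hence `g = (p - q)/(p + q)` with `p = 1 + αs > 0` and
`q = νΔt s / 2 ≥ 0`, and `|p - q| ≤ p + q`. -/

open Complex

theorem abs_sub_div_add_le_one {p q : ℝ} (hp : 0 ≤ p) (hq : 0 ≤ q) : |(p - q) / (p + q)| ≤ 1 := by
  rw [abs_div, abs_of_nonneg (add_nonneg hp hq)]
  exact div_le_one_of_le₀ (abs_sub_le_iff.2 ⟨by linarith, by linarith⟩) (add_nonneg hp hq)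

theorem Complex.exp_mul_I_add_exp_neg_mul_I_sub_two (z : ℂ) :
    exp (z * I) + exp (-z * I) - 2 = -4 * sin (z / 2) ^ 2 := by
  have hcos : cos z = 2 * cos (z / 2) ^ 2 - 1 := by rw [← cos_two_mul]; ring_nf
  rw [← two_cos, hcos]
  linear_combination 4 * sin_sq_add_cos_sq (z / 2)

theorem Complex.second_difference_exp_mul_I (c z : ℂ) (j : ℤ) :
    c * exp (I * ↑(j + 1) * z) - 2 * (c * exp (I * j * z)) + c * exp (I * ↑(j - 1) * z) =
      -4 * sin (z / 2) ^ 2 * (c * exp (I * j * z)) := by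
  have hplus : exp (I * ↑(j + 1) * z) = exp (I * j * z) * exp (z * I) := by
    rw [← exp_add]; push_cast; ring_nf
  have hminus : exp (I * ↑(j - 1) * z) = exp (I * j * z) * exp (-z * I) := by
    rw [← exp_add]; push_cast; ring_nf
  rw [hplus, hminus, ← exp_mul_I_add_exp_neg_mul_I_sub_two]
  ring

/-- Unconditional von Neumann stability of the Crank–Nicolson-type scheme for the
second-grade fluid equation: any Fourier mode `𝔲ⱼⁿ = gⁿ e^{ijθ}` satisfying the scheme has
amplification factor `g` of modulus at most one; explicitly
`g = (1 + αs − νΔt s/2)/(1 + αs + νΔt s/2)` with `s = (4/Δy²) sin²(θ/2)`, a quotient of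
absolute value at most `1`. -/
theorem stmt14 (ν α Δt Δy θ s : ℝ) (hν : 0 < ν) (hα : 0 < α) (hΔt : 0 < Δt)
    (hΔy : 0 < Δy) (hs : s = (4 / Δy ^ 2) * Real.sin (θ / 2) ^ 2)
    (g : ℂ) (𝔲 : ℤ → ℕ → ℂ)
    (h𝔲 : ∀ (j : ℤ) (n : ℕ), 𝔲 j n = g ^ n * Complex.exp (Complex.I * (j : ℂ) * (θ : ℂ)))
    (hscheme : ∀ (j : ℤ) (n : ℕ),
      (𝔲 j (n + 1) - 𝔲 j n) / (Δt : ℂ) =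
        ((ν : ℂ) / (Δy : ℂ) ^ 2) * (1 / 2) *
            ((𝔲 (j + 1) (n + 1) - 2 * 𝔲 j (n + 1) + 𝔲 (j - 1) (n + 1)) +
              (𝔲 (j + 1) n - 2 * 𝔲 j n + 𝔲 (j - 1) n)) +
          ((α : ℂ) / ((Δt : ℂ) * (Δy : ℂ) ^ 2)) *
            ((𝔲 (j + 1) (n + 1) - 2 * 𝔲 j (n + 1) + 𝔲 (j - 1) (n + 1)) -
              (𝔲 (j + 1) n - 2 * 𝔲 j n + 𝔲 (j - 1) n))) :
    ‖g‖ ≤ 1 ∧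
    g = (((1 + α * s - ν * Δt * s / 2) / (1 + α * s + ν * Δt * s / 2) : ℝ) : ℂ) ∧
    |(1 + α * s - ν * Δt * s / 2) / (1 + α * s + ν * Δt * s / 2)| ≤ 1 := by
  have hs0 : 0 ≤ s := by rw [hs]; positivity
  have hp : 0 < 1 + α * s := by positivity
  have hq : 0 ≤ ν * Δt * s / 2 := by positivity
  have hbound := abs_sub_div_add_le_one hp.le hq
  have hΔt' : (Δt : ℂ) ≠ 0 := by exact_mod_cast hΔt.ne'
  have hΔy' : (Δy : ℂ) ≠ 0 := by exact_mod_cast hΔy.ne'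
  have hlap (j : ℤ) (n : ℕ) :
      𝔲 (j + 1) n - 2 * 𝔲 j n + 𝔲 (j - 1) n = -((Δy : ℂ) ^ 2 * s) * 𝔲 j n := by
    simp only [h𝔲, second_difference_exp_mul_I, hs]
    push_cast
    field_simp
  have hg : g * (1 + α * s + ν * Δt * s / 2 : ℝ) = (1 + α * s - ν * Δt * s / 2 : ℝ) := by
    have h := hscheme 0 0
    have h0 : 𝔲 0 0 = 1 := by simp [h𝔲]
    have h1 : 𝔲 0 1 = g := by simp [h𝔲]
    rw [hlap, hlap, Nat.zero_add, h0, h1] at h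
    field_simp at h
    push_cast
    linear_combination h / 2
  have hgeq : g = (((1 + α * s - ν * Δt * s / 2) / (1 + α * s + ν * Δt * s / 2) : ℝ) : ℂ) := by
    rw [Complex.ofReal_div, eq_div_iff (by exact_mod_cast (add_pos_of_pos_of_nonneg hp hq).ne')]
    exact hg
  exact ⟨by rwa [hgeq, Complex.norm_real, Real.norm_eq_abs], hgeq, hbound⟩
end

section
/- Let ν > 0, α > 0, L > 0, T > 0, and let u : ℝ × ℝ → ℝ have continuous partial derivatives ∂_t^a ∂_y^b u for all a ≤ 3 and b ≤ 4 that are bounded on an open set containing [0,L] × [0,T], and suppose u satisfies ∂u/∂t = ν ∂²u/∂y² + α ∂³u/∂t∂y² there. Then there exists C > 0 such that for all Δt, Δy ∈ (0,1] and all points (y,t) with [y−Δy, y+Δy] × [t, t+Δt] ⊆ [0,L] × [0,T], the truncation residual of the Crank–Nicolson-type scheme satisfies |(u(y,t+Δt) − u(y,t))/Δt − (ν/(2Δy²))[(u(y+Δy,t+Δt) − 2u(y,t+Δt) + u(y−Δy,t+Δt)) + (u(y+Δy,t) − 2u(y,t) + u(y−Δy,t))] − (α/(ΔtΔy²))[(u(y+Δy,t+Δt)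 − 2u(y,t+Δt) + u(y−Δy,t+Δt)) − (u(y+Δy,t) − 2u(y,t) + u(y−Δy,t))]| ≤ C(Δt² + Δy²). -/
/-!
Taylor-expand about `(y, t)`. In time, the scheme is the trapezoidal rule for
`u_t = ν u_yy + α ∂_t u_yy`, which is consistent to order `Δt²` once the equation and its
`t`-derivative are used to eliminate `u_t` and `u_tt`. In space, the symmetric second difference
reproduces `Δy² u_yy` up to `Δy⁴ ‖∂_y⁴ u‖ / 12`; for the mixed term, divided by `Δt Δy²`, that
fourth derivative is applied to the time increment of `u`, which is `O(Δt)` by the mean value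
theorem.
-/

open Set Finset
open scoped Nat

theorem abs_le_of_hasDerivAt_of_abs_deriv_le_pow {g g' : ℝ → ℝ} {a b K : ℝ} (n : ℕ)
    (hab : a ≤ b) (hg : ∀ x ∈ Icc a b, HasDerivAt g (g' x) x) (ha : g a = 0)
    (hg' : ∀ x ∈ Icc a b, |g' x| ≤ K * (x - a) ^ n) :
    |g b| ≤ K * (b - a) ^ (n + 1) / (n + 1) := by
  have hbound (x : ℝ) :
      HasDerivAt (fun x => K * (x - a) ^ (n + 1) / (n + 1)) (K * (x - a) ^ n) x := by
    have := ((((hasDerivAt_id' x).sub_const a).fun_pow (n + 1)).const_mul K).div_const ((n : ℝ) + 1)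
    refine this.congr_deriv ?_
    push_cast
    field_simp
  simpa [Real.norm_eq_abs] using image_norm_le_of_norm_deriv_right_le_deriv_boundary
    (fun x hx => (hg x hx).continuousAt.continuousWithinAt)
    (fun x hx => (hg x (Ico_subset_Icc_self hx)).hasDerivWithinAt) (by simp [ha]) hbound
    (fun x hx => by simpa [Real.norm_eq_abs] using hg' x (Ico_subset_Icc_self hx))
    (right_mem_Icc.2 hab)

theorem hasDerivAt_sum_range_mul_pow_div_factorial (c : ℕ → ℝ) (a x : ℝ) (n : ℕ) :
    HasDerivAt (fun x => ∑ k ∈ range (n + 1), c k * (x - a) ^ k / k !)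
      (∑ k ∈ range n, c (k + 1) * (x - a) ^ k / k !) x := by
  induction n with
  | zero => simpa using hasDerivAt_const x (c 0)
  | succ n ih =>
    have hterm := ((((hasDerivAt_id' x).sub_const a).fun_pow (n + 1)).const_mul
      (c (n + 1))).div_const ((n + 1)! : ℝ)
    simp only [sum_range_succ _ (n + 1)]
    refine (ih.fun_add hterm).congr_deriv ?_
    rw [sum_range_succ, Nat.factorial_succ]
    push_cast
    field_simp

theorem abs_sub_taylor_le {f : ℕ → ℝ → ℝ} {a b M : ℝ} (n : ℕ) (hab : a ≤ b)
    (hf : ∀ k < n, ∀ x ∈ Icc a b, HasDerivAt (f k) (f (k + 1) x) x)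
    (hM : ∀ x ∈ Icc a b, |f n x| ≤ M) :
    |f 0 b - ∑ k ∈ range n, f k a * (b - a) ^ k / k !| ≤ M * (b - a) ^ n / n ! := by
  induction n generalizing f b with
  | zero => simpa using hM b (right_mem_Icc.2 hab)
  | succ n ih =>
    have hderiv (x : ℝ) (hx : x ∈ Icc a b) :
        HasDerivAt (fun x => f 0 x - ∑ k ∈ range (n + 1), f k a * (x - a) ^ k / k !)
          (f 1 x - ∑ k ∈ range n, f (k + 1) a * (x - a) ^ k / k !) x :=
      (hf 0 (by omega) x hx).sub (hasDerivAt_sum_range_mul_pow_div_factorial _ a x n)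
    have hbound (x : ℝ) (hx : x ∈ Icc a b) :
        |f 1 x - ∑ k ∈ range n, f (k + 1) a * (x - a) ^ k / k !| ≤ M / n ! * (x - a) ^ n := by
      have hsub : Icc a x ⊆ Icc a b := Icc_subset_Icc_right hx.2
      rw [div_mul_eq_mul_div]
      exact ih (f := fun k => f (k + 1)) hx.1
        (fun k hk y hy => hf (k + 1) (by omega) y (hsub hy)) (fun y hy => hM y (hsub hy))
    have := abs_le_of_hasDerivAt_of_abs_deriv_le_pow n hab hderiv
      (by simp [sum_range_succ']) hbound
    convert this using 1
    rw [Nat.factorial_succ]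
    push_cast
    field_simp

theorem abs_sub_taylor_le_of_le {f : ℕ → ℝ → ℝ} {a b M : ℝ} (n : ℕ) (hba : b ≤ a)
    (hf : ∀ k < n, ∀ x ∈ Icc b a, HasDerivAt (f k) (f (k + 1) x) x)
    (hM : ∀ x ∈ Icc b a, |f n x| ≤ M) :
    |f 0 b - ∑ k ∈ range n, f k a * (b - a) ^ k / k !| ≤ M * (a - b) ^ n / n ! := by
  have hmem {x : ℝ} (hx : x ∈ Icc (-a) (-b)) : -x ∈ Icc b a :=
    ⟨by linarith [hx.2], by linarith [hx.1]⟩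
  have hderiv (k : ℕ) (hk : k < n) (x : ℝ) (hx : x ∈ Icc (-a) (-b)) :
      HasDerivAt (fun x => (-1) ^ k * f k (-x)) ((-1) ^ (k + 1) * f (k + 1) (-x)) x := by
    have := ((hf k hk (-x) (hmem hx)).comp x (hasDerivAt_neg x)).const_mul ((-1 : ℝ) ^ k)
    exact this.congr_deriv (by ring)
  have := abs_sub_taylor_le (f := fun k x => (-1) ^ k * f k (-x)) n (neg_le_neg hba) hderiv
    (fun x hx => by simpa [abs_mul] using hM (-x) (hmem hx))
  simp only [neg_neg, pow_zero, one_mul, sub_neg_eq_add, neg_add_eq_sub] at this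
  convert this using 4 with k
  rw [show b - a = -1 * (a - b) by ring, mul_pow]
  ring

theorem abs_second_central_difference_sub_le {f : ℕ → ℝ → ℝ} {y h M : ℝ} (hh : 0 ≤ h)
    (hf : ∀ k < 4, ∀ x ∈ Icc (y - h) (y + h), HasDerivAt (f k) (f (k + 1) x) x)
    (hM : ∀ x ∈ Icc (y - h) (y + h), |f 4 x| ≤ M) :
    |f 0 (y + h) - 2 * f 0 y + f 0 (y - h) - f 2 y * h ^ 2| ≤ M / 12 * h ^ 4 := by
  have hright : Icc y (y + h) ⊆ Icc (y - h) (y + h) := Icc_subset_Icc_left (by linarith)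
  have hleft : Icc (y - h) y ⊆ Icc (y - h) (y + h) := Icc_subset_Icc_right (by linarith)
  have hR := abs_sub_taylor_le 4 (by linarith : y ≤ y + h)
    (fun k hk x hx => hf k hk x (hright hx)) (fun x hx => hM x (hright hx))
  have hL := abs_sub_taylor_le_of_le 4 (by linarith : y - h ≤ y)
    (fun k hk x hx => hf k hk x (hleft hx)) (fun x hx => hM x (hleft hx))
  norm_num [sum_range_succ, Nat.factorial] at hR hL
  rw [abs_le] at hR hL ⊢
  constructor <;> linarith [hR.1, hR.2, hL.1, hL.2]

theorem abs_trapezoidal_residual_le {U W : ℕ → ℝ → ℝ} {ν α t τ K : ℝ} (hτ : 0 < τ)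
    (hU : ∀ k < 3, ∀ s ∈ Icc t (t + τ), HasDerivAt (U k) (U (k + 1) s) s)
    (hW : ∀ k < 3, ∀ s ∈ Icc t (t + τ), HasDerivAt (W k) (W (k + 1) s) s)
    (hU3 : ∀ s ∈ Icc t (t + τ), |U 3 s| ≤ K) (hW2 : ∀ s ∈ Icc t (t + τ), |W 2 s| ≤ K)
    (hW3 : ∀ s ∈ Icc t (t + τ), |W 3 s| ≤ K)
    (h₁ : U 1 t = ν * W 0 t + α * W 1 t) (h₂ : U 2 t = ν * W 1 t + α * W 2 t) :
    |(U 0 (t + τ) - U 0 t) / τ - ν / 2 * (W 0 (t + τ) + W 0 t) -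
        α / τ * (W 0 (t + τ) - W 0 t)| ≤ (1 / 6 + |ν| / 4 + |α| / 6) * K * τ ^ 2 := by
  have htτ : t ≤ t + τ := by linarith
  have eU := abs_sub_taylor_le 3 htτ hU hU3
  have eW₂ := abs_sub_taylor_le 2 htτ (fun k hk => hW k (by omega)) hW2
  have eW₃ := abs_sub_taylor_le 3 htτ hW hW3
  norm_num [sum_range_succ, Nat.factorial, h₁, h₂] at eU eW₂ eW₃
  set rU := U 0 (t + τ) -
    (U 0 t + (ν * W 0 t + α * W 1 t) * τ + (ν * W 1 t + α * W 2 t) * τ ^ 2 / 2)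
  set rW₂ := W 0 (t + τ) - (W 0 t + W 1 t * τ)
  set rW₃ := W 0 (t + τ) - (W 0 t + W 1 t * τ + W 2 t * τ ^ 2 / 2)
  have hsplit : (U 0 (t + τ) - U 0 t) / τ - ν / 2 * (W 0 (t + τ) + W 0 t) -
      α / τ * (W 0 (t + τ) - W 0 t) = rU / τ - ν / 2 * rW₂ - α / τ * rW₃ := by
    field_simp
    ring
  rw [hsplit]
  calc _ ≤ |rU / τ| + |ν / 2 * rW₂| + |α / τ * rW₃| :=
        (abs_sub _ _).trans (add_le_add_left (abs_sub _ _) _)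
    _ = |rU| / τ + |ν| / 2 * |rW₂| + |α| / τ * |rW₃| := by
        simp only [abs_div, abs_mul, abs_of_pos hτ, abs_two]
    _ ≤ K * τ ^ 3 / 6 / τ + |ν| / 2 * (K * τ ^ 2 / 2) + |α| / τ * (K * τ ^ 3 / 6) := by
        gcongr
    _ = (1 / 6 + |ν| / 4 + |α| / 6) * K * τ ^ 2 := by
        field_simp
        ring

theorem abs_crankNicolson_residual_le_of_estimates {ν α τ h u₀ u₁ w₀ w₁ δ₀ δ₁ A B E : ℝ}
    (hτ : 0 < τ) (hh : 0 < h)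
    (htime : |(u₁ - u₀) / τ - ν / 2 * (w₁ + w₀) - α / τ * (w₁ - w₀)| ≤ A)
    (hδ₀ : |δ₀ - w₀ * h ^ 2| ≤ B * h ^ 4) (hδ₁ : |δ₁ - w₁ * h ^ 2| ≤ B * h ^ 4)
    (hmixed : |δ₁ - δ₀ - (w₁ - w₀) * h ^ 2| ≤ E * τ * h ^ 4) :
    |(u₁ - u₀) / τ - ν / (2 * h ^ 2) * (δ₁ + δ₀) - α / (τ * h ^ 2) * (δ₁ - δ₀)| ≤
      A + (|ν| * B + |α| * E) * h ^ 2 := by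
  set r := (u₁ - u₀) / τ - ν / 2 * (w₁ + w₀) - α / τ * (w₁ - w₀) with hr
  have hsplit : (u₁ - u₀) / τ - ν / (2 * h ^ 2) * (δ₁ + δ₀) - α / (τ * h ^ 2) * (δ₁ - δ₀) =
      r - ν / (2 * h ^ 2) * ((δ₁ - w₁ * h ^ 2) + (δ₀ - w₀ * h ^ 2)) -
        α / (τ * h ^ 2) * (δ₁ - δ₀ - (w₁ - w₀) * h ^ 2) := by
    rw [hr]
    field_simp
    ring
  rw [hsplit]
  calc _ ≤ |r| + |ν / (2 * h ^ 2) * ((δ₁ - w₁ * h ^ 2) + (δ₀ - w₀ * h ^ 2))| +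
        |α / (τ * h ^ 2) * (δ₁ - δ₀ - (w₁ - w₀) * h ^ 2)| :=
        (abs_sub _ _).trans (add_le_add_left (abs_sub _ _) _)
    _ ≤ |r| + |ν| / (2 * h ^ 2) * (|δ₁ - w₁ * h ^ 2| + |δ₀ - w₀ * h ^ 2|) +
        |α| / (τ * h ^ 2) * |δ₁ - δ₀ - (w₁ - w₀) * h ^ 2| := by
        simp only [abs_mul, abs_div, abs_of_pos (by positivity : (0 : ℝ) < 2 * h ^ 2),
          abs_of_pos (by positivity : 0 < τ * h ^ 2)]
        gcongr
        exact abs_add_le _ _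
    _ ≤ A + |ν| / (2 * h ^ 2) * (B * h ^ 4 + B * h ^ 4) + |α| / (τ * h ^ 2) * (E * τ * h ^ 4) := by
        gcongr
    _ = A + (|ν| * B + |α| * E) * h ^ 2 := by
        field_simp
        ring

theorem Set.Finite.exists_nonneg_abs_le {ι X : Type*} {s : Set ι} (hs : s.Finite)
    {f : ι → X → ℝ} {S : Set X} (h : ∀ i ∈ s, ∃ M, ∀ x ∈ S, |f i x| ≤ M) :
    ∃ K, 0 ≤ K ∧ ∀ i ∈ s, ∀ x ∈ S, |f i x| ≤ K := by
  choose! M hM using h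
  refine ⟨∑ i ∈ hs.toFinset, |M i|, by positivity, fun i hi x hx => ?_⟩
  calc |f i x| ≤ M i := hM i hi x hx
    _ ≤ |M i| := le_abs_self _
    _ ≤ _ := single_le_sum (fun j _ => abs_nonneg (M j)) (hs.mem_toFinset.2 hi)

section SecondGradeFluid

variable {D : ℕ → ℕ → ℝ → ℝ → ℝ} {V : Set (ℝ × ℝ)} {ν α : ℝ}

theorem time_derivative_of_pde (hV : IsOpen V)
    (hDt : ∀ a : ℕ, a < 3 → ∀ b : ℕ, b ≤ 4 → ∀ y t : ℝ, (y, t) ∈ V →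
      HasDerivAt (fun τ => D a b y τ) (D (a + 1) b y t) t)
    (hpde : ∀ y t : ℝ, (y, t) ∈ V → D 1 0 y t = ν * D 0 2 y t + α * D 1 2 y t)
    {y t : ℝ} (hyt : (y, t) ∈ V) : D 2 0 y t = ν * D 1 2 y t + α * D 2 2 y t :=
  (hDt 1 (by norm_num) 0 (by norm_num) y t hyt).unique <|
    (((hDt 0 (by norm_num) 2 (by norm_num) y t hyt).const_mul ν).add
      ((hDt 1 (by norm_num) 2 (by norm_num) y t hyt).const_mul α)).congr_of_eventuallyEq <|
    Filter.mem_of_superset ((hV.preimage (Continuous.prodMk_right y)).mem_nhds hyt)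
      fun s hs => hpde y s hs

theorem abs_crankNicolson_residual_le
    (hDy : ∀ b : ℕ, b < 4 → ∀ y t : ℝ, (y, t) ∈ V →
      HasDerivAt (fun z => D 0 b z t) (D 0 (b + 1) y t) y)
    (hDt : ∀ a : ℕ, a < 3 → ∀ b : ℕ, b ≤ 4 → ∀ y t : ℝ, (y, t) ∈ V →
      HasDerivAt (fun τ => D a b y τ) (D (a + 1) b y t) t)
    {K : ℝ} (hK : ∀ a ≤ 3, ∀ b ≤ 4, ∀ p ∈ V, |D a b p.1 p.2| ≤ K)
    {y t τ h : ℝ} (hτ : 0 < τ) (hh : 0 < h) (hsub : Icc (y - h) (y + h) ×ˢ Icc t (t + τ) ⊆ V)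
    (hpde₁ : D 1 0 y t = ν * D 0 2 y t + α * D 1 2 y t)
    (hpde₂ : D 2 0 y t = ν * D 1 2 y t + α * D 2 2 y t) :
    |(D 0 0 y (t + τ) - D 0 0 y t) / τ -
        ν / (2 * h ^ 2) * ((D 0 0 (y + h) (t + τ) - 2 * D 0 0 y (t + τ) + D 0 0 (y - h) (t + τ)) +
          (D 0 0 (y + h) t - 2 * D 0 0 y t + D 0 0 (y - h) t)) -
        α / (τ * h ^ 2) * ((D 0 0 (y + h) (t + τ) - 2 * D 0 0 y (t + τ) + D 0 0 (y - h) (t + τ)) -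
          (D 0 0 (y + h) t - 2 * D 0 0 y t + D 0 0 (y - h) t))| ≤
      (1 / 6 + |ν| / 4 + |α| / 6) * K * τ ^ 2 + (|ν| * (K / 12) + |α| * (K / 12)) * h ^ 2 := by
  have hV {z s : ℝ} (hz : z ∈ Icc (y - h) (y + h)) (hs : s ∈ Icc t (t + τ)) : (z, s) ∈ V :=
    hsub ⟨hz, hs⟩
  have hy : y ∈ Icc (y - h) (y + h) := ⟨by linarith, by linarith⟩
  have ht₀ : t ∈ Icc t (t + τ) := ⟨le_rfl, by linarith⟩
  have ht₁ : t + τ ∈ Icc t (t + τ) := ⟨by linarith, le_rfl⟩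
  have htime := abs_trapezoidal_residual_le (U := fun k s => D k 0 y s)
    (W := fun k s => D k 2 y s) hτ
    (fun k hk s hs => hDt k hk 0 (by norm_num) y s (hV hy hs))
    (fun k hk s hs => hDt k hk 2 (by norm_num) y s (hV hy hs))
    (fun s hs => hK 3 le_rfl 0 (by norm_num) _ (hV hy hs))
    (fun s hs => hK 2 (by norm_num) 2 (by norm_num) _ (hV hy hs))
    (fun s hs => hK 3 le_rfl 2 (by norm_num) _ (hV hy hs)) hpde₁ hpde₂
  have hspace {s : ℝ} (hs : s ∈ Icc t (t + τ)) :=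
    abs_second_central_difference_sub_le (f := fun k z => D 0 k z s) hh.le
      (fun k hk z hz => hDy k hk z s (hV hz hs))
      (fun z hz => hK 0 (by norm_num) 4 le_rfl _ (hV hz hs))
  have hincrement (z : ℝ) (hz : z ∈ Icc (y - h) (y + h)) :
      |D 0 4 z (t + τ) - D 0 4 z t| ≤ K * τ := by
    simpa using abs_sub_taylor_le (f := fun k s => D k 4 z s) 1 ht₁.1
      (fun k hk s hs => hDt k (by omega) 4 le_rfl z s (hV hz hs))
      (fun s hs => hK 1 (by norm_num) 4 le_rfl _ (hV hz hs))
  have hmixed := abs_second_central_difference_sub_le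
    (f := fun k z => D 0 k z (t + τ) - D 0 k z t) hh.le
    (fun k hk z hz => (hDy k hk z (t + τ) (hV hz ht₁)).sub (hDy k hk z t (hV hz ht₀)))
    hincrement
  refine abs_crankNicolson_residual_le_of_estimates hτ hh htime (hspace ht₀) (hspace ht₁) ?_
  convert hmixed using 2 <;> ring

end SecondGradeFluid

theorem stmt15_general (ν α L T : ℝ)
    (u : ℝ × ℝ → ℝ) (V : Set (ℝ × ℝ)) (hV : IsOpen V)
    (hVsub : Set.Icc (0:ℝ) L ×ˢ Set.Icc (0:ℝ) T ⊆ V)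
    (D : ℕ → ℕ → ℝ → ℝ → ℝ)
    (hD00 : ∀ y t : ℝ, D 0 0 y t = u (y, t))
    (hDy : ∀ b : ℕ, b < 4 → ∀ y t : ℝ, (y, t) ∈ V →
      HasDerivAt (fun z => D 0 b z t) (D 0 (b + 1) y t) y)
    (hDt : ∀ a : ℕ, a < 3 → ∀ b : ℕ, b ≤ 4 → ∀ y t : ℝ, (y, t) ∈ V →
      HasDerivAt (fun τ => D a b y τ) (D (a + 1) b y t) t)
    (hbdd : ∀ a : ℕ, a ≤ 3 → ∀ b : ℕ, b ≤ 4 → ∃ M : ℝ, ∀ p ∈ V, |D a b p.1 p.2| ≤ M)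
    (hpde : ∀ y t : ℝ, (y, t) ∈ V → D 1 0 y t = ν * D 0 2 y t + α * D 1 2 y t) :
    ∃ C > 0, ∀ Δt Δy : ℝ, Δt ∈ Set.Ioc (0:ℝ) 1 → Δy ∈ Set.Ioc (0:ℝ) 1 →
      ∀ y t : ℝ,
        Set.Icc (y - Δy) (y + Δy) ×ˢ Set.Icc t (t + Δt) ⊆
          Set.Icc (0:ℝ) L ×ˢ Set.Icc (0:ℝ) T →
        |(u (y, t + Δt) - u (y, t)) / Δt -
            (ν / (2 * Δy ^ 2)) *
              ((u (y + Δy, t + Δt) - 2 * u (y, t + Δt) + u (y - Δy, t + Δt)) +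
                (u (y + Δy, t) - 2 * u (y, t) + u (y - Δy, t))) -
            (α / (Δt * Δy ^ 2)) *
              ((u (y + Δy, t + Δt) - 2 * u (y, t + Δt) + u (y - Δy, t + Δt)) -
                (u (y + Δy, t) - 2 * u (y, t) + u (y - Δy, t)))| ≤
          C * (Δt ^ 2 + Δy ^ 2) := by
  obtain ⟨K, hK₀, hK⟩ := ((finite_Iic (3 : ℕ)).prod (finite_Iic (4 : ℕ))).exists_nonneg_abs_le
    (f := fun (ab : ℕ × ℕ) (p : ℝ × ℝ) => D ab.1 ab.2 p.1 p.2)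
    fun ab hab => hbdd ab.1 hab.1 ab.2 hab.2
  refine ⟨(1 + |ν| + |α|) * K + 1, by positivity, ?_⟩
  rintro Δt Δy ⟨hΔt, -⟩ ⟨hΔy, -⟩ y t hsub
  have hsubV := hsub.trans hVsub
  have hyt : (y, t) ∈ V := hsubV ⟨⟨by linarith, by linarith⟩, ⟨le_rfl, by linarith⟩⟩
  simp only [← hD00]
  calc _ ≤ (1 / 6 + |ν| / 4 + |α| / 6) * K * Δt ^ 2 + (|ν| * (K / 12) + |α| * (K / 12)) * Δy ^ 2 :=
        abs_crankNicolson_residual_le hDy hDt (fun a ha b hb => hK (a, b) ⟨ha, hb⟩)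
          hΔt hΔy hsubV (hpde y t hyt) (time_derivative_of_pde hV hDt hpde hyt)
    _ ≤ ((1 + |ν| + |α|) * K + 1) * (Δt ^ 2 + Δy ^ 2) := by
        nlinarith [mul_nonneg (abs_nonneg ν) hK₀, mul_nonneg (abs_nonneg α) hK₀,
          sq_nonneg Δt, sq_nonneg Δy]

/-- Second-order accuracy (truncation error `O(Δt² + Δy²)`) of the Crank–Nicolson-type
discretization of the second-grade fluid equation `∂u/∂t = ν ∂²u/∂y² + α ∂³u/∂t∂y²`.
Here `D a b` denotes the iterated partial derivative `∂ₜᵃ ∂_yᵇ u`, assumed to exist, be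
continuous and bounded on an open set `V` containing `[0,L] × [0,T]` for all `a ≤ 3`,
`b ≤ 4`. -/
theorem stmt15 (ν α L T : ℝ) (hν : 0 < ν) (hα : 0 < α) (hL : 0 < L) (hT : 0 < T)
    (u : ℝ × ℝ → ℝ) (V : Set (ℝ × ℝ)) (hV : IsOpen V)
    (hVsub : Set.Icc (0:ℝ) L ×ˢ Set.Icc (0:ℝ) T ⊆ V)
    (D : ℕ → ℕ → ℝ → ℝ → ℝ)
    (hD00 : ∀ y t : ℝ, D 0 0 y t = u (y, t))
    (hDy : ∀ b : ℕ, b < 4 → ∀ y t : ℝ, (y, t) ∈ V →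
      HasDerivAt (fun z => D 0 b z t) (D 0 (b + 1) y t) y)
    (hDt : ∀ a : ℕ, a < 3 → ∀ b : ℕ, b ≤ 4 → ∀ y t : ℝ, (y, t) ∈ V →
      HasDerivAt (fun τ => D a b y τ) (D (a + 1) b y t) t)
    (hcont : ∀ a : ℕ, a ≤ 3 → ∀ b : ℕ, b ≤ 4 →
      ContinuousOn (fun p : ℝ × ℝ => D a b p.1 p.2) V)
    (hbdd : ∀ a : ℕ, a ≤ 3 → ∀ b : ℕ, b ≤ 4 → ∃ M : ℝ, ∀ p ∈ V, |D a b p.1 p.2| ≤ M)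
    (hpde : ∀ y t : ℝ, (y, t) ∈ V → D 1 0 y t = ν * D 0 2 y t + α * D 1 2 y t) :
    ∃ C > 0, ∀ Δt Δy : ℝ, Δt ∈ Set.Ioc (0:ℝ) 1 → Δy ∈ Set.Ioc (0:ℝ) 1 →
      ∀ y t : ℝ,
        Set.Icc (y - Δy) (y + Δy) ×ˢ Set.Icc t (t + Δt) ⊆
          Set.Icc (0:ℝ) L ×ˢ Set.Icc (0:ℝ) T →
        |(u (y, t + Δt) - u (y, t)) / Δt -
            (ν / (2 * Δy ^ 2)) *
              ((u (y + Δy, t + Δt) - 2 * u (y, t + Δt) + u (y - Δy, t + Δt)) +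
                (u (y + Δy, t) - 2 * u (y, t) + u (y - Δy, t))) -
            (α / (Δt * Δy ^ 2)) *
              ((u (y + Δy, t + Δt) - 2 * u (y, t + Δt) + u (y - Δy, t + Δt)) -
                (u (y + Δy, t) - 2 * u (y, t) + u (y - Δy, t)))| ≤
          C * (Δt ^ 2 + Δy ^ 2) :=
  stmt15_general ν α L T u V hV hVsub D hD00 hDy hDt hbdd hpde
end
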